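/- arXiv:1802.09692 — 2 statements merged into one kernel-verified Lean document; each statement's English description precedes it below -/
import Mathlib

section
/- If $k$ is an increasing function on $[-1,1]$, $u \in S^n$, and $f: S^n \to \mathbb{R}$ is radial symmetric and decreasing with respect to $u$, then the function $T_k f(x) = \int_{S^n} k(x\cdot y) f(y)\, d\mu(y)$ is also radial symmetric and decreasing with respect to $u$. -/
/-!
Let `x₁, x₂ ∈ Sⁿ` with `x₁·u ≤ x₂·u`. The reflection `R` in the hyperplane orthogonal to
`x₂ - x₁` swaps `x₁` and `x₂` and preserves the Hausdorff measure of the sphere, so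
`2 (T x₂ - T x₁) = ∫ (k(x₂·y) - k(x₁·y)) (φ(y·u) - φ(Ry·u)) dμ(y)`. Both factors have the sign of
`(x₂ - x₁)·y`, hence `T x₁ ≤ T x₂`: on the sphere `T` is a monotone function of `x·u`.
Integrability comes from `μH[n] (Sⁿ) < ∞`: the sphere is covered by the radial projections of the
`2(n+1)` faces of the cube `[-1,1]ⁿ⁺¹`, which are `C¹` images of a compact convex set.
-/

open MeasureTheory Metric Set Function Submodule
open scoped RealInnerProductSpace

lemma MonotoneOn.exists_monotone_eqOn_Icc {α β : Type*} [LinearOrder α]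
    [ConditionallyCompleteLinearOrder β] {f : α → β} {a b : α} (hf : MonotoneOn f (Icc a b)) :
    ∃ g : α → β, Monotone g ∧ EqOn f g (Icc a b) :=
  hf.exists_monotone_extension
    ⟨f a, by rintro _ ⟨x, hx, rfl⟩; exact hf ⟨le_rfl, hx.1.trans hx.2⟩ hx hx.1⟩
    ⟨f b, by rintro _ ⟨x, hx, rfl⟩; exact hf hx ⟨hx.1.trans hx.2, le_rfl⟩ hx.2⟩

lemma exists_monotone_comp_eqOn {α γ β : Type*} [Nonempty α] [LinearOrder γ]
    [ConditionallyCompleteLinearOrder β] {T : α → β} {p : α → γ} {s : Set α}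
    (hT : ∀ a ∈ s, ∀ b ∈ s, p a ≤ p b → T a ≤ T b) (hl : BddBelow (T '' s))
    (hu : BddAbove (T '' s)) : ∃ ψ : γ → β, Monotone ψ ∧ ∀ a ∈ s, T a = ψ (p a) := by
  classical
  set ψ₀ := T ∘ invFunOn p s
  have hψ₀ : ∀ a ∈ s, T a = ψ₀ (p a) := by
    intro a ha
    have hmem : invFunOn p s (p a) ∈ s := invFunOn_mem ⟨a, ha, rfl⟩
    have heq : p (invFunOn p s (p a)) = p a := invFunOn_eq ⟨a, ha, rfl⟩
    exact le_antisymm (hT _ ha _ hmem heq.ge) (hT _ hmem _ ha heq.le)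
  have hmono : MonotoneOn ψ₀ (p '' s) := by
    rintro _ ⟨a, ha, rfl⟩ _ ⟨b, hb, rfl⟩ hab
    rw [← hψ₀ a ha, ← hψ₀ b hb]
    exact hT a ha b hb hab
  have himg : ψ₀ '' (p '' s) = T '' s := by
    rw [image_image]
    exact image_congr fun a ha => (hψ₀ a ha).symm
  obtain ⟨ψ, hψ, hψ₀ψ⟩ := hmono.exists_monotone_extension (himg ▸ hl) (himg ▸ hu)
  exact ⟨ψ, hψ, fun a ha => (hψ₀ a ha).trans (hψ₀ψ (mem_image_of_mem p ha))⟩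

lemma Monotone.abs_le_max_of_abs_le {g : ℝ → ℝ} (hg : Monotone g) {t c : ℝ} (ht : |t| ≤ c) :
    |g t| ≤ max |g (-c)| |g c| :=
  abs_le_max_abs_abs (hg (neg_le_of_abs_le ht)) (hg (le_of_abs_le ht))

lemma Monotone.sub_mul_sub_nonneg_of_mul_nonneg {g h : ℝ → ℝ} (hg : Monotone g)
    (hh : Monotone h) {a b c d : ℝ} (habcd : 0 ≤ (b - a) * (d - c)) :
    0 ≤ (g b - g a) * (h d - h c) := by
  rcases mul_nonneg_iff.1 habcd with ⟨h₁, h₂⟩ | ⟨h₁, h₂⟩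
  · exact mul_nonneg (sub_nonneg.2 (hg (by linarith))) (sub_nonneg.2 (hh (by linarith)))
  · exact mul_nonneg_of_nonpos_of_nonpos (sub_nonpos.2 (hg (by linarith)))
      (sub_nonpos.2 (hh (by linarith)))

section Reflection

variable {E : Type*} [NormedAddCommGroup E] [InnerProductSpace ℝ E]

lemma inner_reflection_orthogonal_singleton (w y v : E) :
    ⟪reflection (ℝ ∙ w)ᗮ y, v⟫ = ⟪y, v⟫ - 2 * (⟪w, y⟫ / ‖w‖ ^ 2) * ⟪w, v⟫ := by
  rw [reflection_orthogonal_apply, reflection_singleton_apply, two_smul]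
  simp only [inner_neg_left, inner_sub_left, inner_add_left, real_inner_smul_left,
    RCLike.ofReal_real_eq_id, id_eq]
  ring

lemma inner_reflection_comm (K : Submodule ℝ E) [K.HasOrthogonalProjection] (y v : E) :
    ⟪K.reflection y, v⟫ = ⟪y, K.reflection v⟫ := by
  conv_lhs => rw [← K.reflection_reflection v, LinearIsometryEquiv.inner_map_map]

variable [MeasurableSpace E] [BorelSpace E] {g h : ℝ → ℝ}

lemma integral_mul_inner_le_of_measurePreserving {μ : Measure E} (hg : Monotone g)
    (hh : Monotone h) {x₁ x₂ u : E} (hx : ‖x₂‖ = ‖x₁‖) (hu : ⟪x₁, u⟫ ≤ ⟪x₂, u⟫)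
    (hμ : MeasurePreserving (reflection (ℝ ∙ (x₂ - x₁))ᗮ) μ μ)
    (hi₁ : Integrable (fun y => g ⟪x₁, y⟫ * h ⟪y, u⟫) μ)
    (hi₂ : Integrable (fun y => g ⟪x₂, y⟫ * h ⟪y, u⟫) μ) :
    ∫ y, g ⟪x₁, y⟫ * h ⟪y, u⟫ ∂μ ≤ ∫ y, g ⟪x₂, y⟫ * h ⟪y, u⟫ ∂μ := by
  set R := reflection (ℝ ∙ (x₂ - x₁))ᗮ
  set D : E → ℝ := fun y => g ⟪x₂, y⟫ * h ⟪y, u⟫ - g ⟪x₁, y⟫ * h ⟪y, u⟫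
  have hD : Integrable D μ := hi₂.sub hi₁
  have hRx₂ : R x₂ = x₁ := reflection_sub hx
  have hRx₁ : R x₁ = x₂ := by rw [← hRx₂, reflection_reflection]
  have hwu : 0 ≤ ⟪x₂ - x₁, u⟫ := by rw [inner_sub_left]; linarith
  have hpos : ∀ y, 0 ≤ D y + D (R y) := by
    intro y
    have h₁ : ⟪x₁, R y⟫ = ⟪x₂, y⟫ := by rw [← inner_reflection_comm, hRx₁]
    have h₂ : ⟪x₂, R y⟫ = ⟪x₁, y⟫ := by rw [← inner_reflection_comm, hRx₂]
    have hsum : D y + D (R y) = (g ⟪x₂, y⟫ - g ⟪x₁, y⟫) * (h ⟪y, u⟫ - h ⟪R y, u⟫) := by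
      simp only [D, h₁, h₂]
      ring
    rw [hsum]
    refine hg.sub_mul_sub_nonneg_of_mul_nonneg hh ?_
    rw [inner_reflection_orthogonal_singleton, ← inner_sub_left]
    calc (0 : ℝ) ≤ 2 * (⟪x₂ - x₁, y⟫ ^ 2 / ‖x₂ - x₁‖ ^ 2) * ⟪x₂ - x₁, u⟫ :=
          mul_nonneg (by positivity) hwu
      _ = _ := by ring
  have hR : ∫ y, D (R y) ∂μ = ∫ y, D y ∂μ :=
    hμ.integral_comp R.toHomeomorph.measurableEmbedding D
  have hDR : Integrable (fun y => D (R y)) μ := hμ.integrable_comp_of_integrable hD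
  have hsum : 0 ≤ ∫ y, D y ∂μ + ∫ y, D (R y) ∂μ := by
    rw [← integral_add hD hDR]
    exact integral_nonneg hpos
  rw [hR, integral_sub hi₂ hi₁] at hsum
  linarith

lemma integrableOn_sphere_mul_inner {μ : Measure E} {r : ℝ} (hS : μ (sphere (0 : E) r) < ⊤)
    (hg : Monotone g) (hh : Monotone h) (x u : E) :
    IntegrableOn (fun y => g ⟪x, y⟫ * h ⟪y, u⟫) (sphere 0 r) μ := by
  refine IntegrableOn.of_bound hS ?_
    (max |g (-(‖x‖ * r))| |g (‖x‖ * r)| * max |h (-(r * ‖u‖))| |h (r * ‖u‖)|) ?_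
  · exact ((hg.measurable.comp (continuous_const.inner continuous_id).measurable).mul
      (hh.measurable.comp (continuous_id.inner continuous_const).measurable)).aestronglyMeasurable
  refine ae_restrict_of_forall_mem isClosed_sphere.measurableSet fun y hy => ?_
  rw [mem_sphere_zero_iff_norm] at hy
  rw [Real.norm_eq_abs, abs_mul]
  refine mul_le_mul (hg.abs_le_max_of_abs_le ?_) (hh.abs_le_max_of_abs_le ?_) (abs_nonneg _)
    ((abs_nonneg _).trans (le_max_left _ _))
  · simpa [hy] using abs_real_inner_le_norm x y
  · simpa [hy] using abs_real_inner_le_norm y u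

lemma setIntegral_sphere_mul_inner_le {d r : ℝ} (hS : μH[d] (sphere (0 : E) r) < ⊤)
    (hg : Monotone g) (hh : Monotone h) {x₁ x₂ u : E} (hx : ‖x₂‖ = ‖x₁‖)
    (hu : ⟪x₁, u⟫ ≤ ⟪x₂, u⟫) :
    ∫ y in sphere 0 r, g ⟪x₁, y⟫ * h ⟪y, u⟫ ∂μH[d] ≤
      ∫ y in sphere 0 r, g ⟪x₂, y⟫ * h ⟪y, u⟫ ∂μH[d] := by
  refine integral_mul_inner_le_of_measurePreserving hg hh hx hu ?_
    (integrableOn_sphere_mul_inner hS hg hh _ _) (integrableOn_sphere_mul_inner hS hg hh _ _)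
  have hR := ((reflection (ℝ ∙ (x₂ - x₁))ᗮ).toIsometryEquiv.measurePreserving_hausdorffMeasure
    d).restrict_preimage (isClosed_sphere (x := (0 : E)) (ε := r)).measurableSet
  simpa [LinearIsometryEquiv.preimage_sphere] using hR

end Reflection

lemma hausdorffMeasure_image_lt_top_of_contDiffOn {E F : Type*} [NormedAddCommGroup E]
    [NormedSpace ℝ E] [FiniteDimensional ℝ E] [MeasurableSpace E] [BorelSpace E]
    [NormedAddCommGroup F] [NormedSpace ℝ F] [MeasurableSpace F] [BorelSpace F]
    {f : E → F} {s : Set E} (hf : ContDiffOn ℝ 1 f s) (hs : Convex ℝ s) (hs' : IsCompact s) :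
    μH[Module.finrank ℝ E] (f '' s) < ⊤ := by
  obtain ⟨K, hK⟩ := hf.exists_lipschitzOnWith one_ne_zero hs hs'
  calc μH[Module.finrank ℝ E] (f '' s)
      ≤ K ^ (Module.finrank ℝ E : ℝ) * μH[Module.finrank ℝ E] s :=
        hK.hausdorffMeasure_image_le (by positivity)
    _ < ⊤ := ENNReal.mul_lt_top (by simp) hs'.measure_lt_top

section SphereMeasure

variable {n : ℕ}

def cubeFace (i : Fin (n + 1)) (ε : ℝ) (y : Fin n → ℝ) : EuclideanSpace ℝ (Fin (n + 1)) :=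
  WithLp.toLp 2 (i.insertNth ε y)

lemma contDiff_cubeFace (i : Fin (n + 1)) (ε : ℝ) : ContDiff ℝ 1 (cubeFace i ε) := by
  refine PiLp.contDiff_toLp.comp (contDiff_pi.2 fun j => ?_)
  rcases Fin.eq_self_or_eq_succAbove i j with rfl | ⟨j, rfl⟩
  · simpa using contDiff_const
  · simpa using contDiff_apply ℝ ℝ j

lemma cubeFace_ne_zero {i : Fin (n + 1)} {ε : ℝ} (hε : ε ≠ 0) (y : Fin n → ℝ) :
    cubeFace i ε y ≠ 0 := fun h => hε (by simpa [cubeFace] using congrArg (· i) h)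

lemma contDiff_normalize_cubeFace (i : Fin (n + 1)) {ε : ℝ} (hε : ε ≠ 0) :
    ContDiff ℝ 1 fun y => ‖cubeFace i ε y‖⁻¹ • cubeFace i ε y :=
  (((contDiff_cubeFace i ε).norm ℝ (cubeFace_ne_zero hε)).inv
    fun y => norm_ne_zero_iff.2 (cubeFace_ne_zero hε y)).smul (contDiff_cubeFace i ε)

lemma sphere_subset_biUnion_normalize_cubeFace :
    sphere (0 : EuclideanSpace ℝ (Fin (n + 1))) 1 ⊆
      ⋃ p ∈ (univ : Set (Fin (n + 1))) ×ˢ ({-1, 1} : Set ℝ),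
        (fun y => ‖cubeFace p.1 p.2 y‖⁻¹ • cubeFace p.1 p.2 y) '' closedBall 0 1 := by
  intro x hx
  rw [mem_sphere_zero_iff_norm] at hx
  obtain ⟨i, hi⟩ := Finite.exists_max fun j => |x j|
  have hxi : x i ≠ 0 := by
    intro h0
    have : x = 0 := by
      ext j
      simpa [h0] using hi j
    simp [this] at hx
  set t := |x i|
  have ht : 0 < t := abs_pos.2 hxi
  have hface : cubeFace i (x i / t) (fun j => x (i.succAbove j) / t) = t⁻¹ • x := by
    ext j
    rcases Fin.eq_self_or_eq_succAbove i j with rfl | ⟨j, rfl⟩ <;>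
      simp [cubeFace, div_eq_inv_mul]
  refine mem_biUnion (x := (i, x i / t)) ⟨mem_univ _, ?_⟩
    ⟨fun j => x (i.succAbove j) / t, ?_, ?_⟩
  · rcases abs_choice (x i) with h | h
    · simp [t, h, div_self hxi]
    · simp [t, h, div_neg, div_self hxi]
  · rw [mem_closedBall_zero_iff, pi_norm_le_iff_of_nonneg zero_le_one]
    intro j
    rw [Real.norm_eq_abs, abs_div, abs_of_pos ht, div_le_one ht]
    exact hi _
  · simp only [hface, norm_smul, norm_inv, Real.norm_eq_abs, abs_of_pos ht, hx, mul_one, inv_inv,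
      smul_smul, mul_inv_cancel₀ ht.ne', one_smul]

lemma hausdorffMeasure_sphere_lt_top :
    μH[n] (sphere (0 : EuclideanSpace ℝ (Fin (n + 1))) 1) < ⊤ := by
  refine (measure_mono sphere_subset_biUnion_normalize_cubeFace).trans_lt
    (measure_biUnion_lt_top (finite_univ.prod (toFinite _)) ?_)
  rintro ⟨i, ε⟩ ⟨-, hε⟩
  have hε : ε ≠ 0 := by rcases hε with rfl | rfl <;> norm_num
  simpa using hausdorffMeasure_image_lt_top_of_contDiffOn
    (contDiff_normalize_cubeFace i hε).contDiffOn (convex_closedBall _ _) (isCompact_closedBall _ _)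

end SphereMeasure

/-- If `k` is increasing on `[-1,1]` and `f` is radial symmetric and decreasing with respect
to `u ∈ Sⁿ` (i.e. `f(x) = φ(x·u)` with `φ` increasing), then so is
`T_k f(x) = ∫_{Sⁿ} k(x·y) f(y) dμ(y)`. -/
theorem stmt_3 (n : ℕ) (k : ℝ → ℝ) (hk : MonotoneOn k (Icc (-1 : ℝ) 1))
    (u : EuclideanSpace ℝ (Fin (n + 1))) (hu : ‖u‖ = 1)
    (f : EuclideanSpace ℝ (Fin (n + 1)) → ℝ)
    (hf : ∃ φ : ℝ → ℝ, MonotoneOn φ (Icc (-1 : ℝ) 1) ∧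
      ∀ x ∈ sphere (0 : EuclideanSpace ℝ (Fin (n + 1))) 1, f x = φ ⟪x, u⟫) :
    ∃ ψ : ℝ → ℝ, MonotoneOn ψ (Icc (-1 : ℝ) 1) ∧
      ∀ x ∈ sphere (0 : EuclideanSpace ℝ (Fin (n + 1))) 1,
        (∫ y in sphere (0 : EuclideanSpace ℝ (Fin (n + 1))) 1,
            k ⟪x, y⟫ * f y ∂μH[(n : ℝ)]) = ψ ⟪x, u⟫ := by
  obtain ⟨φ, hφ, hfφ⟩ := hf
  obtain ⟨g, hg, hkg⟩ := hk.exists_monotone_eqOn_Icc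
  obtain ⟨h, hh, hφh⟩ := hφ.exists_monotone_eqOn_Icc
  set S := sphere (0 : EuclideanSpace ℝ (Fin (n + 1))) 1
  set T := fun x => ∫ y in S, k ⟪x, y⟫ * f y ∂μH[(n : ℝ)]
  have hS : ∀ {x}, x ∈ S ↔ ‖x‖ = 1 := mem_sphere_zero_iff_norm
  have hT : ∀ x ∈ S, T x = ∫ y in S, g ⟪x, y⟫ * h ⟪y, u⟫ ∂μH[(n : ℝ)] := fun x hx =>
    setIntegral_congr_fun isClosed_sphere.measurableSet fun y hy => by
      rw [hfφ y hy, hkg (real_inner_mem_Icc_of_norm_eq_one (hS.1 hx) (hS.1 hy)),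
        hφh (real_inner_mem_Icc_of_norm_eq_one (hS.1 hy) hu)]
  have hmono : ∀ x₁ ∈ S, ∀ x₂ ∈ S, ⟪x₁, u⟫ ≤ ⟪x₂, u⟫ → T x₁ ≤ T x₂ := by
    intro x₁ hx₁ x₂ hx₂ hle
    rw [hT x₁ hx₁, hT x₂ hx₂]
    exact setIntegral_sphere_mul_inner_le hausdorffMeasure_sphere_lt_top hg hh
      (by rw [hS.1 hx₁, hS.1 hx₂]) hle
  have huS : u ∈ S := hS.2 hu
  have hnuS : -u ∈ S := hS.2 (by rw [norm_neg, hu])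
  have hu_range : ∀ x ∈ S, ⟪-u, u⟫ ≤ ⟪x, u⟫ ∧ ⟪x, u⟫ ≤ ⟪u, u⟫ := fun x hx => by
    simpa [real_inner_self_eq_norm_sq, hu] using real_inner_mem_Icc_of_norm_eq_one (hS.1 hx) hu
  obtain ⟨ψ, hψ, hTψ⟩ := exists_monotone_comp_eqOn hmono
    ⟨T (-u), by rintro _ ⟨x, hx, rfl⟩; exact hmono _ hnuS _ hx (hu_range x hx).1⟩
    ⟨T u, by rintro _ ⟨x, hx, rfl⟩; exact hmono _ hx _ huS (hu_range x hx).2⟩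
  exact ⟨ψ, hψ.monotoneOn _, hTψ⟩
end

section
/- For any $u_0 \in S^n$ and $\varepsilon > 0$, the set of reflections $\{R_u : u \in S^n, \|u - u_0\| < \varepsilon\}$ generates the full orthogonal group $O(n+1)$, where $R_u x = x - 2(x\cdot u)u$ is the reflection with respect to the hyperplane $u^\perp$. -/
/-!
Let `H` be the group generated by the reflections `R_a` with `a` within `ε` of `u₀`. For a unit
vector `u` with `‖u - u₀‖ < ε`, the normalised bisector `a` of `u` and `u₀` is even closer to `u₀`,
and `R_a R_{u₀} u₀ = u`. Translating by `H`, the `H`-orbit of `u₀` contains the `ε`-neighbourhood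
of each of its points on the sphere, so it is open and closed there, hence the whole sphere (which
is connected, or equal to `{u₀, -u₀}` in dimension one). Since `R_{A u} = A R_u A⁻¹`, `H` then
contains every reflection, and reflections generate the orthogonal group (Cartan–Dieudonné).
-/

open Metric Set Submodule
open scoped RealInnerProductSpace

theorem IsPreconnected.subset_of_forall_ball_inter_subset {X : Type*} [PseudoMetricSpace X]
    {s t : Set X} (hs : IsPreconnected s) (hst : (s ∩ t).Nonempty) {δ : ℝ} (hδ : 0 < δ)
    (ht : ∀ p ∈ t, ball p δ ∩ s ⊆ t) : s ⊆ t := by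
  have hδ2 : 0 < δ / 2 := half_pos hδ
  have hnear : ∀ x ∈ s, ∀ y ∈ thickening (δ / 2) t, dist x y < δ / 2 → x ∈ t := by
    intro x hx y hy hxy
    obtain ⟨z, hz, hyz⟩ := mem_thickening_iff.1 hy
    refine ht z hz ⟨?_, hx⟩
    calc dist x z ≤ dist x y + dist y z := dist_triangle x y z
      _ < δ / 2 + δ / 2 := add_lt_add hxy hyz
      _ = δ := add_halves δ
  have hsub : s ⊆ thickening (δ / 2) t := by
    refine hs.subset_of_closure_inter_subset isOpen_thickening ?_ ?_
    · exact hst.mono (inter_subset_inter_right s (self_subset_thickening hδ2 t))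
    · rintro x ⟨hxc, hxs⟩
      obtain ⟨y, hy, hxy⟩ := Metric.mem_closure_iff.1 hxc (δ / 2) hδ2
      exact self_subset_thickening hδ2 t (hnear x hxs y hy hxy)
  exact fun x hx => hnear x hx x (hsub hx) (by simpa using hδ2)

theorem eq_or_eq_neg_of_rank_le_one {E : Type*} [NormedAddCommGroup E] [NormedSpace ℝ E]
    (hE : Module.rank ℝ E ≤ 1) {u w : E} (h : ‖w‖ = ‖u‖) : w = u ∨ w = -u := by
  obtain ⟨v, hv⟩ := rank_le_one_iff.1 hE
  obtain ⟨r, rfl⟩ := hv u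
  obtain ⟨s, rfl⟩ := hv w
  rcases eq_or_ne v 0 with rfl | hv0
  · simp
  have hrs : |s| = |r| := by
    simpa [norm_smul, norm_ne_zero_iff.2 hv0] using h
  rcases abs_eq_abs.1 hrs with rfl | rfl
  · exact Or.inl rfl
  · exact Or.inr (neg_smul r v)

variable {E : Type*} [NormedAddCommGroup E] [InnerProductSpace ℝ E]

theorem reflection_orthogonal_span_singleton_apply_of_norm_eq_one {u : E} (hu : ‖u‖ = 1)
    (x : E) : reflection (ℝ ∙ u)ᗮ x = x - (2 * ⟪x, u⟫) • u := by
  rw [reflection_orthogonal_apply, reflection_singleton_apply, hu, real_inner_comm]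
  simp only [RCLike.ofReal_real_eq_id, id, one_pow, div_one, neg_sub, mul_smul, two_smul]

theorem reflection_orthogonal_span_singleton_smul {c : ℝ} (hc : c ≠ 0) (v : E) :
    reflection (ℝ ∙ (c • v))ᗮ = reflection (ℝ ∙ v)ᗮ := by
  simp only [span_singleton_smul_eq (IsUnit.mk0 c hc)]

theorem reflection_orthogonal_span_singleton_map (A : E ≃ₗᵢ[ℝ] E) (u : E) :
    reflection (ℝ ∙ A u)ᗮ = A * reflection (ℝ ∙ u)ᗮ * A⁻¹ := by
  have hspan : (ℝ ∙ A u)ᗮ = (ℝ ∙ u)ᗮ.map (A.toLinearEquiv : E →ₗ[ℝ] E) := by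
    rw [map_orthogonal_equiv, ← span_image]
    simp
  simp only [hspan]
  rw [reflection_map]
  rfl

theorem exists_reflection_apply_eq_neg {u v : E} (hu : ‖u‖ = 1) (hv : ‖v‖ = 1)
    (huv : u + v ≠ 0) :
    ∃ a : E, ‖a‖ = 1 ∧ ‖a - v‖ ≤ ‖u - v‖ ∧ reflection (ℝ ∙ a)ᗮ v = -u := by
  set s := ‖u + v‖
  have hs : 0 < s := norm_pos_iff.2 huv
  have hs2 : s ≤ 2 := by
    calc s ≤ ‖u‖ + ‖v‖ := norm_add_le u v
      _ = 2 := by rw [hu, hv]; norm_num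
  have huv_inner : 2 * ⟪u, v⟫ = s ^ 2 - 2 := by
    rw [norm_add_sq_real, hu, hv]; ring
  have ha : ‖s⁻¹ • (u + v)‖ = 1 := norm_smul_inv_norm huv
  refine ⟨s⁻¹ • (u + v), ha, ?_, ?_⟩
  · -- the midpoint of the arc from `v` to `u`: `‖a - v‖² = 2 - s ≤ 4 - s² = ‖u - v‖²`
    have hav : ‖s⁻¹ • (u + v) - v‖ ^ 2 = 2 - s := by
      rw [norm_sub_sq_real, ha, hv, real_inner_smul_left, inner_add_left,
        real_inner_self_eq_norm_sq, hv]
      field_simp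
      linear_combination -huv_inner
    have huv' : ‖u - v‖ ^ 2 = 4 - s ^ 2 := by
      rw [norm_sub_sq_real, hu, hv]; linear_combination -huv_inner
    refine le_of_sq_le_sq ?_ (norm_nonneg _)
    rw [hav, huv']
    nlinarith
  · rw [reflection_orthogonal_span_singleton_smul (inv_ne_zero hs.ne'), add_comm, ← sub_neg_eq_add]
    exact reflection_sub (by rw [norm_neg, hu, hv])

section ReflectionsNear

variable {H : Subgroup (E ≃ₗᵢ[ℝ] E)} {u₀ : E} {ε : ℝ}

theorem exists_mem_apply_eq_of_norm_sub_lt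
    (hH : ∀ a : E, ‖a‖ = 1 → ‖a - u₀‖ < ε → reflection (ℝ ∙ a)ᗮ ∈ H) (hu₀ : ‖u₀‖ = 1)
    {A : E ≃ₗᵢ[ℝ] E} (hA : A ∈ H) {q : E} (hq : ‖q‖ = 1) (hqA : ‖q - A u₀‖ < ε) :
    ∃ B ∈ H, B u₀ = q := by
  have hR₀ : reflection (ℝ ∙ u₀)ᗮ ∈ H :=
    hH u₀ hu₀ (by simpa using (norm_nonneg _).trans_lt hqA)
  set u := A.symm q
  have hu : ‖u‖ = 1 := by rwa [A.symm.norm_map]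
  have huu₀ : ‖u - u₀‖ < ε := by
    rwa [← A.norm_map, map_sub, A.apply_symm_apply]
  by_cases hantipodal : u + u₀ = 0
  · refine ⟨A * reflection (ℝ ∙ u₀)ᗮ, mul_mem hA hR₀, ?_⟩
    change A (reflection (ℝ ∙ u₀)ᗮ u₀) = q
    rw [reflection_orthogonalComplement_singleton_eq_neg, ← eq_neg_of_add_eq_zero_left hantipodal,
      A.apply_symm_apply]
  · obtain ⟨a, ha, hau₀, hRa⟩ := exists_reflection_apply_eq_neg hu hu₀ hantipodal
    refine ⟨A * reflection (ℝ ∙ a)ᗮ * reflection (ℝ ∙ u₀)ᗮ,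
      mul_mem (mul_mem hA (hH a ha (hau₀.trans_lt huu₀))) hR₀, ?_⟩
    change A (reflection (ℝ ∙ a)ᗮ (reflection (ℝ ∙ u₀)ᗮ u₀)) = q
    rw [reflection_orthogonalComplement_singleton_eq_neg, map_neg, hRa, neg_neg,
      A.apply_symm_apply]

theorem exists_mem_apply_eq_of_norm_eq_one
    (hH : ∀ a : E, ‖a‖ = 1 → ‖a - u₀‖ < ε → reflection (ℝ ∙ a)ᗮ ∈ H) (hu₀ : ‖u₀‖ = 1)
    (hε : 0 < ε) {w : E} (hw : ‖w‖ = 1) : ∃ A ∈ H, A u₀ = w := by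
  rcases le_or_gt (Module.rank ℝ E) 1 with hE | hE
  · rcases eq_or_eq_neg_of_rank_le_one hE (hw.trans hu₀.symm) with rfl | rfl
    · exact ⟨1, one_mem H, rfl⟩
    · exact ⟨_, hH u₀ hu₀ (by simpa using hε), reflection_orthogonalComplement_singleton_eq_neg u₀⟩
  · have horbit : sphere (0 : E) 1 ⊆ {w | ∃ A ∈ H, A u₀ = w} := by
      refine (isPreconnected_sphere hE 0 1).subset_of_forall_ball_inter_subset
        ⟨u₀, by simpa using hu₀, 1, one_mem H, rfl⟩ hε ?_
      rintro _ ⟨A, hA, rfl⟩ q ⟨hqA, hq⟩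
      exact exists_mem_apply_eq_of_norm_sub_lt hH hu₀ hA (by simpa using hq)
        (by rwa [← dist_eq_norm])
    exact horbit (by simpa using hw)

theorem reflection_orthogonal_span_singleton_mem
    (hH : ∀ a : E, ‖a‖ = 1 → ‖a - u₀‖ < ε → reflection (ℝ ∙ a)ᗮ ∈ H) (hu₀ : ‖u₀‖ = 1)
    (hε : 0 < ε) (v : E) : reflection (ℝ ∙ v)ᗮ ∈ H := by
  rcases eq_or_ne v 0 with rfl | hv
  · have hR : reflection (ℝ ∙ (0 : E))ᗮ = 1 := by
      ext x
      exact reflection_mem_subspace_eq_self (by simp)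
    exact hR ▸ one_mem H
  · have hv1 : ‖‖v‖⁻¹ • v‖ = 1 := norm_smul_inv_norm hv
    obtain ⟨A, hA, hAu₀⟩ := exists_mem_apply_eq_of_norm_eq_one hH hu₀ hε hv1
    rw [← reflection_orthogonal_span_singleton_smul (inv_ne_zero (norm_ne_zero_iff.2 hv)),
      ← hAu₀, reflection_orthogonal_span_singleton_map]
    exact mul_mem (mul_mem hA (hH u₀ hu₀ (by simpa using hε))) (inv_mem hA)

theorem eq_top_of_reflection_orthogonal_span_singleton_mem [FiniteDimensional ℝ E]
    (hH : ∀ a : E, ‖a‖ = 1 → ‖a - u₀‖ < ε → reflection (ℝ ∙ a)ᗮ ∈ H) (hu₀ : ‖u₀‖ = 1)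
    (hε : 0 < ε) : H = ⊤ := by
  rw [eq_top_iff, ← LinearIsometryEquiv.reflections_generate, Subgroup.closure_le]
  rintro _ ⟨v, rfl⟩
  exact reflection_orthogonal_span_singleton_mem hH hu₀ hε v

end ReflectionsNear

/-- For any `u₀ ∈ Sⁿ` and `ε > 0`, the reflections `R_u x = x - 2(x·u)u` with `u ∈ Sⁿ`,
`‖u - u₀‖ < ε`, generate the full orthogonal group `O(n+1)` (realized as the group of
linear isometric equivalences of `ℝ^{n+1}`). -/
theorem stmt_8 (n : ℕ) (u₀ : EuclideanSpace ℝ (Fin (n + 1))) (hu₀ : ‖u₀‖ = 1)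
    (ε : ℝ) (hε : 0 < ε) :
    Subgroup.closure
      {A : EuclideanSpace ℝ (Fin (n + 1)) ≃ₗᵢ[ℝ] EuclideanSpace ℝ (Fin (n + 1)) |
        ∃ u : EuclideanSpace ℝ (Fin (n + 1)), ‖u‖ = 1 ∧ ‖u - u₀‖ < ε ∧
          ∀ x, A x = x - (2 * ⟪x, u⟫) • u} = ⊤ :=
  eq_top_of_reflection_orthogonal_span_singleton_mem (fun a ha hau₀ => Subgroup.subset_closure
    ⟨a, ha, hau₀, reflection_orthogonal_span_singleton_apply_of_norm_eq_one ha⟩) hu₀ hε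
end
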